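/- arXiv:math/0702004 — 2 statements merged into one kernel-verified Lean document; each statement's English description precedes it below -/
import Mathlib

section
/- Let F be a simple graph with m edges and let W, W' be graphons with C = max{1, ‖W‖_∞, ‖W'‖_∞}. Then |t(F, W) − t(F, W')| ≤ 4 m C^{m−1} · ‖W − W'‖_□, where t(F, W) = ∫_{[0,1]^{V(F)}} ∏_{ij ∈ E(F)} W(x_i, x_j) dx. -/
/-!
Switch the edges of `F` from `W'` to `W` one at a time. Each switch changes the density by the
integral of `(W - W')(x_a, x_b)` against the product of the other `m - 1` edge weights. Since no
other edge contains both `a` and `b`, once all remaining coordinates are frozen that product splits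
as `u(x_a) v(x_b)` with `|u| |v| ≤ C^(m-1)`. Finally
`|∫∫ D(x,y) u(x) v(y)| ≤ 4 ‖u‖_∞ ‖v‖_∞ ‖D‖_□`: integrating a function against a bounded weight
costs a factor `2 ‖weight‖_∞` over its supremum on sets (split into positive and negative parts),
once for each variable.
-/
open MeasureTheory

/-- The cut norm of a kernel `W` on `[0,1]²`. -/
noncomputable def cutNorm (W : ℝ → ℝ → ℝ) : ℝ :=
  sSup {r : ℝ | ∃ S T : Set ℝ, MeasurableSet S ∧ MeasurableSet T ∧
    S ⊆ Set.Icc 0 1 ∧ T ⊆ Set.Icc 0 1 ∧ r = |∫ x in S, ∫ y in T, W x y|}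

/-- Homomorphism density `t(F,W) = ∫_{[0,1]^k} ∏_{ij ∈ E(F)} W(x_i,x_j) dx` of a
simple graph `F` on `k` vertices in a symmetric kernel `W`. -/
noncomputable def homDensity {k : ℕ} (F : SimpleGraph (Fin k)) [DecidableRel F.Adj]
    (W : ℝ → ℝ → ℝ) (hsymm : ∀ x y, W x y = W y x) : ℝ :=
  ∫ x in Set.univ.pi (fun _ : Fin k => Set.Icc (0:ℝ) 1),
    ∏ e ∈ F.edgeFinset,
      Sym2.lift ⟨fun u v => W (x u) (x v), fun a b => hsymm (x a) (x b)⟩ e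

open Function Set

section Bilinear

variable {α : Type*} [MeasurableSpace α] {μ : Measure α}

theorem integrable_of_abs_le [IsFiniteMeasure μ] {f : α → ℝ} (hf : Measurable f) {K : ℝ}
    (hK : ∀ x, |f x| ≤ K) : Integrable f μ :=
  .of_bound hf.aestronglyMeasurable K (.of_forall hK)

theorem Finset.abs_prod_le_pow_card {κ : Type*} {s : Finset κ} {f : κ → ℝ} {C : ℝ}
    (h : ∀ e ∈ s, |f e| ≤ C) : |∏ e ∈ s, f e| ≤ C ^ s.card := by
  rw [Finset.abs_prod, ← Finset.prod_const]
  exact Finset.prod_le_prod (fun _ _ => abs_nonneg _) h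

theorem integral_abs_le_two_mul_of_abs_setIntegral_le {g : α → ℝ} (hgm : Measurable g)
    (hg : Integrable g μ) {c : ℝ} (hc : ∀ S, MeasurableSet S → |∫ x in S, g x ∂μ| ≤ c) :
    ∫ x, |g x| ∂μ ≤ 2 * c := by
  set P := {x | 0 < g x}
  have hP : MeasurableSet P := measurableSet_lt measurable_const hgm
  calc ∫ x, |g x| ∂μ = ∫ x in P, |g x| ∂μ + ∫ x in Pᶜ, |g x| ∂μ :=
        (integral_add_compl hP hg.abs).symm
    _ = ∫ x in P, g x ∂μ - ∫ x in Pᶜ, g x ∂μ := by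
        rw [setIntegral_congr_fun hP fun x hx => abs_of_pos hx,
          setIntegral_congr_fun hP.compl fun x (hx : ¬0 < g x) => abs_of_nonpos (not_lt.1 hx),
          integral_neg, sub_eq_add_neg]
    _ ≤ 2 * c := by
        linarith [le_abs_self (∫ x in P, g x ∂μ), neg_abs_le (∫ x in Pᶜ, g x ∂μ),
          hc P hP, hc Pᶜ hP.compl]

theorem abs_integral_mul_le_of_abs_setIntegral_le {g u : α → ℝ} (hgm : Measurable g)
    (hg : Integrable g μ) (hu : Measurable u) {A c : ℝ} (hA : 0 ≤ A) (hub : ∀ x, |u x| ≤ A)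
    (hc : ∀ S, MeasurableSet S → |∫ x in S, g x ∂μ| ≤ c) :
    |∫ x, u x * g x ∂μ| ≤ 2 * A * c :=
  calc |∫ x, u x * g x ∂μ| ≤ ∫ x, |u x * g x| ∂μ := abs_integral_le_integral_abs
    _ ≤ ∫ x, A * |g x| ∂μ := by
        refine integral_mono (hg.bdd_mul hu.aestronglyMeasurable (.of_forall hub)).abs
          (hg.abs.const_mul A) fun x => ?_
        rw [abs_mul]
        exact mul_le_mul_of_nonneg_right (hub x) (abs_nonneg _)
    _ = A * ∫ x, |g x| ∂μ := integral_const_mul A _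
    _ ≤ A * (2 * c) :=
        mul_le_mul_of_nonneg_left (integral_abs_le_two_mul_of_abs_setIntegral_le hgm hg hc) hA
    _ = 2 * A * c := by ring

variable [IsFiniteMeasure μ] {D : α → α → ℝ} {M c : ℝ}

theorem abs_integral_mul_integral_kernel_mul_le (hD : Measurable (uncurry D))
    (hDb : ∀ x y, |D x y| ≤ M)
    (hcut : ∀ S T, MeasurableSet S → MeasurableSet T → |∫ x in S, ∫ y in T, D x y ∂μ ∂μ| ≤ c)
    {u v : α → ℝ} (hu : Measurable u) (hv : Measurable v) {A B : ℝ} (hA : 0 ≤ A) (hB : 0 ≤ B)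
    (hub : ∀ x, |u x| ≤ A) (hvb : ∀ y, |v y| ≤ B) :
    |∫ x, u x * ∫ y, D x y * v y ∂μ ∂μ| ≤ 4 * A * B * c := by
  have hDv : Measurable (uncurry fun x y => D x y * v y) := hD.mul (hv.comp measurable_snd)
  have hDvb : ∀ p : α × α, |D p.1 p.2 * v p.2| ≤ M * B := fun p => by
    rw [abs_mul]
    exact mul_le_mul (hDb _ _) (hvb _) (abs_nonneg _) ((abs_nonneg _).trans (hDb p.1 p.1))
  have hDt : Measurable (uncurry fun y x => D x y) := hD.comp measurable_swap
  have hφ : ∀ S, MeasurableSet S → |∫ x in S, ∫ y, D x y * v y ∂μ ∂μ| ≤ 2 * B * c := by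
    intro S hS
    rw [integral_integral_swap (integrable_of_abs_le hDv hDvb)]
    simp_rw [integral_mul_const, mul_comm _ (v _)]
    refine abs_integral_mul_le_of_abs_setIntegral_le
      hDt.stronglyMeasurable.integral_prod_right.measurable
      (integrable_of_abs_le hDt (fun p => hDb p.2 p.1)).integral_prod_left hv hB hvb
      fun T hT => ?_
    rw [integral_integral_swap (integrable_of_abs_le hDt (fun p => hDb p.2 p.1))]
    exact hcut S T hS hT
  calc |∫ x, u x * ∫ y, D x y * v y ∂μ ∂μ| ≤ 2 * A * (2 * B * c) :=
        abs_integral_mul_le_of_abs_setIntegral_le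
          hDv.stronglyMeasurable.integral_prod_right.measurable
          (integrable_of_abs_le hDv hDvb).integral_prod_left hu hA hub hφ
    _ = 4 * A * B * c := by ring

end Bilinear

theorem DependsOn.apply_update {ι α β : Type*} [DecidableEq ι] {f : (ι → α) → β} {i : ι}
    (hf : DependsOn f {i}ᶜ) (x : ι → α) (t : α) : f (Function.update x i t) = f x :=
  hf fun _ hj => update_of_ne hj _ _

open Classical in
theorem prod_apply_update_update {ι α κ R : Type*} [DecidableEq ι] [CommMonoid R] {a b : ι}
    (hab : a ≠ b) {S : Finset κ} {f : κ → (ι → α) → R}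
    (hdep : ∀ e ∈ S, DependsOn (f e) {b}ᶜ ∨ DependsOn (f e) {a}ᶜ) (z : ι → α) (s t : α) :
    ∏ e ∈ S, f e (update (update z a s) b t) =
      (∏ e ∈ S with DependsOn (f e) {b}ᶜ, f e (update z a s)) *
        ∏ e ∈ S with ¬DependsOn (f e) {b}ᶜ, f e (update z b t) := by
  rw [← Finset.prod_filter_mul_prod_filter_not S fun e => DependsOn (f e) {b}ᶜ]
  congr 1
  · exact Finset.prod_congr rfl fun e he => (Finset.mem_filter.1 he).2.apply_update _ _
  · refine Finset.prod_congr rfl fun e he => ?_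
    obtain ⟨he, hnb⟩ := Finset.mem_filter.1 he
    rw [update_comm hab]
    exact ((hdep e he).resolve_left hnb).apply_update _ _

section Coordinates

variable {α : Type*} [MeasurableSpace α] {μ : Measure α} [IsProbabilityMeasure μ]
  {ι : Type*} [Fintype ι] [DecidableEq ι]

theorem measurePreserving_update (i : ι) :
    MeasurePreserving (fun q : (ι → α) × α => update q.1 i q.2)
      ((Measure.pi fun _ => μ).prod μ) (Measure.pi fun _ => μ) := by
  refine ⟨measurable_update', (Measure.pi_eq fun s hs => ?_).symm⟩
  have hpre : (fun q : (ι → α) × α => update q.1 i q.2) ⁻¹' univ.pi s =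
      univ.pi (update s i univ) ×ˢ s i := by
    ext ⟨z, t⟩
    simp only [mem_preimage, mem_pi, mem_univ, true_implies, mem_prod]
    refine ⟨fun h => ⟨fun j => ?_, by simpa using h i⟩, fun h j => ?_⟩
    · rcases eq_or_ne j i with rfl | hj
      · simp
      · simpa [hj] using h j
    · rcases eq_or_ne j i with rfl | hj
      · simpa using h.2
      · simpa [hj] using h.1 j
  rw [Measure.map_apply measurable_update' (.univ_pi hs), hpre, Measure.prod_prod,
    Measure.pi_pi, ← Finset.prod_erase_mul _ _ (Finset.mem_univ i),
    ← Finset.prod_erase_mul _ _ (Finset.mem_univ i)]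
  simp only [update_self, measure_univ, mul_one]
  congr 1
  exact Finset.prod_congr rfl fun j hj => by rw [update_of_ne (Finset.ne_of_mem_erase hj)]

theorem integral_eq_integral_update (i : ι) {f : (ι → α) → ℝ}
    (hf : Integrable f (Measure.pi fun _ => μ)) :
    ∫ x, f x ∂(Measure.pi fun _ => μ) = ∫ z, ∫ s, f (update z i s) ∂μ ∂(Measure.pi fun _ => μ) := by
  have hmp := measurePreserving_update (μ := μ) i
  rw [← integral_prod (fun q => f (update q.1 i q.2)) ((hmp.integrable_comp hf.1).2 hf),
    ← integral_map hmp.measurable.aemeasurable (by rw [hmp.map_eq]; exact hf.1), hmp.map_eq]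

theorem integral_eq_integral_update_update (a b : ι) {f : (ι → α) → ℝ}
    (hf : Integrable f (Measure.pi fun _ => μ)) :
    ∫ x, f x ∂(Measure.pi fun _ => μ) =
      ∫ z, ∫ s, ∫ t, f (update (update z a s) b t) ∂μ ∂μ ∂(Measure.pi fun _ => μ) := by
  have hG : Integrable (fun z => ∫ t, f (update z b t) ∂μ) (Measure.pi fun _ => μ) :=
    (((measurePreserving_update b).integrable_comp hf.1).2 hf).integral_prod_left
  rw [integral_eq_integral_update b hf, integral_eq_integral_update a hG]

end Coordinates

theorem abs_integral_kernel_mul_prod_le {α ι κ : Type*} [MeasurableSpace α] {μ : Measure α}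
    [IsProbabilityMeasure μ] [Fintype ι] [DecidableEq ι] {D : α → α → ℝ} {M c C : ℝ}
    (hD : Measurable (uncurry D)) (hDb : ∀ x y, |D x y| ≤ M)
    (hcut : ∀ S T, MeasurableSet S → MeasurableSet T → |∫ x in S, ∫ y in T, D x y ∂μ ∂μ| ≤ c)
    {a b : ι} (hab : a ≠ b) {S : Finset κ} {f : κ → (ι → α) → ℝ} (hf : ∀ e ∈ S, Measurable (f e))
    (hC : 0 ≤ C) (hfC : ∀ e ∈ S, ∀ x, |f e x| ≤ C)
    (hdep : ∀ e ∈ S, DependsOn (f e) {b}ᶜ ∨ DependsOn (f e) {a}ᶜ) :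
    |∫ x, D (x a) (x b) * ∏ e ∈ S, f e x ∂(Measure.pi fun _ => μ)| ≤ 4 * C ^ S.card * c := by
  classical
  set F : (ι → α) → ℝ := fun x => D (x a) (x b) * ∏ e ∈ S, f e x
  have hFm : Measurable F :=
    (hD.comp (f := fun x : ι → α => (x a, x b)) (by fun_prop)).mul
      (Finset.measurable_prod _ hf)
  have hF : Integrable F (Measure.pi fun _ => μ) :=
    integrable_of_abs_le hFm fun x => by
      rw [abs_mul]
      exact mul_le_mul (hDb _ _) (Finset.abs_prod_le_pow_card fun e he => hfC e he x)
        (abs_nonneg _) ((abs_nonneg _).trans (hDb (x a) (x b)))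
  have hinner : ∀ z, |∫ s, ∫ t, F (update (update z a s) b t) ∂μ ∂μ| ≤ 4 * C ^ S.card * c := by
    intro z
    have hsplit : ∀ s t, F (update (update z a s) b t) =
        (∏ e ∈ S with DependsOn (f e) {b}ᶜ, f e (update z a s)) *
          (D s t * ∏ e ∈ S with ¬DependsOn (f e) {b}ᶜ, f e (update z b t)) := fun s t => by
      simp only [F, update_self, update_of_ne hab, prod_apply_update_update hab hdep]
      ring
    simp_rw [hsplit, integral_const_mul]
    calc _ ≤ 4 * C ^ (S.filter fun e => DependsOn (f e) {b}ᶜ).card *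
          C ^ (S.filter fun e => ¬DependsOn (f e) {b}ᶜ).card * c :=
          abs_integral_mul_integral_kernel_mul_le hD hDb hcut
            (Finset.measurable_prod _ fun e he => (hf e (Finset.mem_filter.1 he).1).comp
              (measurable_update z))
            (Finset.measurable_prod _ fun e he => (hf e (Finset.mem_filter.1 he).1).comp
              (measurable_update z))
            (pow_nonneg hC _) (pow_nonneg hC _)
            (fun s => Finset.abs_prod_le_pow_card fun e he => hfC e (Finset.mem_filter.1 he).1 _)
            (fun t => Finset.abs_prod_le_pow_card fun e he => hfC e (Finset.mem_filter.1 he).1 _)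
      _ = 4 * C ^ S.card * c := by
          rw [mul_assoc 4, ← pow_add, Finset.card_filter_add_card_filter_not]
  rw [integral_eq_integral_update_update a b hF]
  simpa using norm_integral_le_of_norm_le_const (μ := Measure.pi fun _ => μ)
    (.of_forall fun z => (Real.norm_eq_abs _).trans_le (hinner z))

theorem Finset.prod_sub_prod_eq_sub_mul_prod_erase {β R : Type*} [CommRing R] [DecidableEq β]
    {s : Finset β} {a : β} (ha : a ∈ s) {f g : β → R} (hfg : ∀ b ∈ s, b ≠ a → f b = g b) :
    ∏ b ∈ s, f b - ∏ b ∈ s, g b = (f a - g a) * ∏ b ∈ s.erase a, g b := by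
  rw [← Finset.mul_prod_erase s f ha, ← Finset.mul_prod_erase s g ha, sub_mul,
    Finset.prod_congr rfl fun b hb =>
      hfg b (Finset.mem_of_mem_erase hb) (Finset.ne_of_mem_erase hb)]

theorem abs_sub_le_card_mul_of_abs_insert_sub_le {β : Type*} [DecidableEq β] {E : Finset β}
    {P : Finset β → ℝ} {δ : ℝ} (h : ∀ ε ∈ E, ∀ B ⊆ E, ε ∉ B → |P (insert ε B) - P B| ≤ δ) :
    |P E - P ∅| ≤ E.card * δ := by
  refine Finset.induction_on' E (by simp) fun ε B hε hB hεB ih => ?_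
  calc |P (insert ε B) - P ∅| ≤ |P (insert ε B) - P B| + |P B - P ∅| := abs_sub_le _ _ _
    _ ≤ δ + B.card * δ := add_le_add (h ε hε B hB hεB) ih
    _ = (insert ε B).card * δ := by
        rw [Finset.card_insert_of_notMem hεB]
        push_cast
        ring

section EdgeFactor

variable {α ι : Type*}

/- The kernel is evaluated at a fixed ordering of the endpoints of `e`; for a symmetric kernel this
is the edge weight `Sym2.lift` of `homDensity`, and no symmetry proofs have to be carried along. -/
noncomputable def edgeFactor (K : α → α → ℝ) (e : Sym2 ι) (x : ι → α) : ℝ :=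
  K (x e.out.1) (x e.out.2)

theorem edgeFactor_eq_lift (K : α → α → ℝ) (hK : ∀ x y, K x y = K y x) (e : Sym2 ι)
    (x : ι → α) :
    Sym2.lift ⟨fun u v => K (x u) (x v), fun u v => hK (x u) (x v)⟩ e = edgeFactor K e x := by
  conv_lhs => rw [← e.out_eq]
  rfl

theorem dependsOn_edgeFactor (K : α → α → ℝ) (e : Sym2 ι) :
    DependsOn (edgeFactor K e) {i | i ∈ e} := fun x y h => by
  simp only [edgeFactor, h _ e.out_fst_mem, h _ e.out_snd_mem]

theorem measurable_edgeFactor [MeasurableSpace α] {K : α → α → ℝ} (hK : Measurable (uncurry K))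
    (e : Sym2 ι) : Measurable (edgeFactor K e) :=
  hK.comp (f := fun x : ι → α => (x e.out.1, x e.out.2)) (by fun_prop)

theorem dependsOn_edgeFactor_or_of_ne (K : α → α → ℝ) {ε e : Sym2 ι} (hab : ε.out.1 ≠ ε.out.2)
    (he : e ≠ ε) :
    DependsOn (edgeFactor K e) {ε.out.2}ᶜ ∨ DependsOn (edgeFactor K e) {ε.out.1}ᶜ := by
  by_cases hbe : ε.out.2 ∈ e
  · refine .inr <| (dependsOn_edgeFactor K e).mono fun i hi hia => he ?_
    exact ((Sym2.mem_and_mem_iff hab).1 ⟨hia ▸ hi, hbe⟩).trans ε.out_eq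
  · exact .inl <| (dependsOn_edgeFactor K e).mono fun i hi hib => hbe (hib ▸ hi)

end EdgeFactor

section HybridDensity

variable {α ι : Type*} [MeasurableSpace α] (μ : Measure α) [Fintype ι] [DecidableEq ι]

noncomputable def hybridDensity (W W' : α → α → ℝ) (E B : Finset (Sym2 ι)) : ℝ :=
  ∫ x, ∏ e ∈ E, edgeFactor (if e ∈ B then W else W') e x ∂(Measure.pi fun _ => μ)

theorem hybridDensity_self (W W' : α → α → ℝ) (E : Finset (Sym2 ι)) :
    hybridDensity μ W W' E E = ∫ x, ∏ e ∈ E, edgeFactor W e x ∂(Measure.pi fun _ => μ) :=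
  integral_congr_ae (.of_forall fun x => Finset.prod_congr rfl fun e he => by simp [he])

theorem hybridDensity_empty (W W' : α → α → ℝ) (E : Finset (Sym2 ι)) :
    hybridDensity μ W W' E ∅ = ∫ x, ∏ e ∈ E, edgeFactor W' e x ∂(Measure.pi fun _ => μ) := by
  simp [hybridDensity]

variable {μ} [IsProbabilityMeasure μ]

theorem abs_hybridDensity_insert_sub_le {W W' : α → α → ℝ} {C c : ℝ}
    (hW : Measurable (uncurry W)) (hW' : Measurable (uncurry W')) (hC : 0 ≤ C)
    (hWb : ∀ x y, |W x y| ≤ C) (hW'b : ∀ x y, |W' x y| ≤ C)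
    (hcut : ∀ S T, MeasurableSet S → MeasurableSet T →
      |∫ x in S, ∫ y in T, W x y - W' x y ∂μ ∂μ| ≤ c)
    {E B : Finset (Sym2 ι)} {ε : Sym2 ι} (hε : ε ∈ E) (hεB : ε ∉ B) (hdiag : ¬ε.IsDiag) :
    |hybridDensity μ W W' E (insert ε B) - hybridDensity μ W W' E B| ≤
      4 * C ^ (E.card - 1) * c := by
  set a := ε.out.1
  set b := ε.out.2
  have hab : a ≠ b := fun h => hdiag (by rw [← ε.out_eq]; exact Sym2.mk_isDiag_iff.2 h)
  have hK : ∀ (B' : Finset (Sym2 ι)) e, Measurable (uncurry (if e ∈ B' then W else W')) := by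
    intro B' e
    split_ifs <;> assumption
  have hKb : ∀ (B' : Finset (Sym2 ι)) e x y, |(if e ∈ B' then W else W') x y| ≤ C := by
    intro B' e x y
    split_ifs
    exacts [hWb x y, hW'b x y]
  have hint : ∀ B', Integrable (fun x => ∏ e ∈ E, edgeFactor (if e ∈ B' then W else W') e x)
      (Measure.pi fun _ => μ) := fun B' =>
    integrable_of_abs_le (Finset.measurable_prod _ fun e _ => measurable_edgeFactor (hK B' e) e)
      fun x => Finset.abs_prod_le_pow_card fun e _ => hKb B' e _ _
  have hdiff : ∀ x, ∏ e ∈ E, edgeFactor (if e ∈ insert ε B then W else W') e x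
      - ∏ e ∈ E, edgeFactor (if e ∈ B then W else W') e x
      = (W (x a) (x b) - W' (x a) (x b)) *
        ∏ e ∈ E.erase ε, edgeFactor (if e ∈ B then W else W') e x := fun x => by
    rw [Finset.prod_sub_prod_eq_sub_mul_prod_erase hε fun e _ he => by
      simp only [Finset.mem_insert, he, false_or]]
    simp [edgeFactor, hεB, a, b]
  rw [hybridDensity, hybridDensity, ← integral_sub (hint _) (hint _)]
  simp_rw [hdiff]
  rw [← Finset.card_erase_of_mem hε]
  exact abs_integral_kernel_mul_prod_le (D := fun x y => W x y - W' x y) (hW.sub hW')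
    (fun x y => (abs_sub _ _).trans (add_le_add (hWb x y) (hW'b x y))) hcut hab
    (fun e _ => measurable_edgeFactor (hK B e) e) hC (fun e _ x => hKb B e _ _)
    fun e he => dependsOn_edgeFactor_or_of_ne _ hab (Finset.ne_of_mem_erase he)

end HybridDensity

theorem abs_setIntegral_le_of_subset_Icc {f : ℝ → ℝ} {M : ℝ} (hM : 0 ≤ M) (hf : ∀ x, |f x| ≤ M)
    {S : Set ℝ} (hS : S ⊆ Icc 0 1) : |∫ x in S, f x| ≤ M :=
  calc |∫ x in S, f x| ≤ M * volume.real S :=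
        (Real.norm_eq_abs _).symm.trans_le <| norm_setIntegral_le_of_norm_le_const
          ((measure_mono hS).trans_lt measure_Icc_lt_top) fun x _ => hf x
    _ ≤ M * 1 := by
        gcongr
        exact (measureReal_mono hS measure_Icc_lt_top.ne).trans (by simp)
    _ = M := mul_one M

theorem abs_setIntegral_setIntegral_le_cutNorm {D : ℝ → ℝ → ℝ} {M : ℝ} (hDb : ∀ x y, |D x y| ≤ M)
    {S T : Set ℝ} (hS : MeasurableSet S) (hT : MeasurableSet T) :
    |∫ x in S, ∫ y in T, D x y ∂volume.restrict (Icc 0 1) ∂volume.restrict (Icc 0 1)| ≤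
      cutNorm D := by
  have hM : 0 ≤ M := (abs_nonneg _).trans (hDb 0 0)
  simp only [Measure.restrict_restrict hS, Measure.restrict_restrict hT]
  refine le_csSup ⟨M, ?_⟩ ⟨S ∩ Icc 0 1, T ∩ Icc 0 1, hS.inter measurableSet_Icc,
    hT.inter measurableSet_Icc, inter_subset_right, inter_subset_right, rfl⟩
  rintro _ ⟨S, T, -, -, hSs, hTs, rfl⟩
  exact abs_setIntegral_le_of_subset_Icc hM
    (fun x => abs_setIntegral_le_of_subset_Icc hM (hDb x) hTs) hSs

theorem homDensity_eq_integral_edgeFactor {k : ℕ} (F : SimpleGraph (Fin k)) [DecidableRel F.Adj]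
    (W : ℝ → ℝ → ℝ) (hsymm : ∀ x y, W x y = W y x) :
    homDensity F W hsymm = ∫ x, ∏ e ∈ F.edgeFinset, edgeFactor W e x
      ∂(Measure.pi fun _ => volume.restrict (Icc (0 : ℝ) 1)) := by
  simp only [homDensity, volume_pi, Measure.restrict_pi_pi]
  exact integral_congr_ae (.of_forall fun x =>
    Finset.prod_congr rfl fun e _ => edgeFactor_eq_lift W hsymm e x)

theorem counting_lemma_general {k : ℕ} (F : SimpleGraph (Fin k)) [DecidableRel F.Adj]
    (W W' : ℝ → ℝ → ℝ)
    (hmeas : Measurable (Function.uncurry W)) (hmeas' : Measurable (Function.uncurry W'))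
    (hsymm : ∀ x y, W x y = W y x) (hsymm' : ∀ x y, W' x y = W' y x)
    (C : ℝ)
    (hb : ∀ x y, |W x y| ≤ C) (hb' : ∀ x y, |W' x y| ≤ C) :
    |homDensity F W hsymm - homDensity F W' hsymm'| ≤
      4 * F.edgeFinset.card * C ^ (F.edgeFinset.card - 1) *
        cutNorm (fun x y => W x y - W' x y) := by
  have : IsProbabilityMeasure (volume.restrict (Icc (0 : ℝ) 1)) := ⟨by simp⟩
  have hC : 0 ≤ C := (abs_nonneg _).trans (hb 0 0)
  have hD : ∀ x y, |W x y - W' x y| ≤ 2 * C := fun x y =>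
    (abs_sub _ _).trans (by linarith [hb x y, hb' x y])
  rw [homDensity_eq_integral_edgeFactor, homDensity_eq_integral_edgeFactor,
    ← hybridDensity_self _ W W', ← hybridDensity_empty _ W W']
  calc _ ≤ F.edgeFinset.card * (4 * C ^ (F.edgeFinset.card - 1) *
        cutNorm (fun x y => W x y - W' x y)) :=
        abs_sub_le_card_mul_of_abs_insert_sub_le fun ε hε B _ hεB =>
          abs_hybridDensity_insert_sub_le hmeas hmeas' hC hb hb'
            (fun S T hS hT => abs_setIntegral_setIntegral_le_cutNorm hD hS hT) hε hεB
            (F.not_isDiag_of_mem_edgeSet (SimpleGraph.mem_edgeFinset.1 hε))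
    _ = _ := by ring

/-- Counting lemma: for a simple graph `F` with `m` edges and graphons `W, W'`
bounded by `C ≥ 1`, `|t(F,W) − t(F,W')| ≤ 4 m C^{m−1} ‖W − W'‖_□`. -/
theorem counting_lemma {k : ℕ} (F : SimpleGraph (Fin k)) [DecidableRel F.Adj]
    (W W' : ℝ → ℝ → ℝ)
    (hmeas : Measurable (Function.uncurry W)) (hmeas' : Measurable (Function.uncurry W'))
    (hsymm : ∀ x y, W x y = W y x) (hsymm' : ∀ x y, W' x y = W' y x)
    (C : ℝ) (hC1 : 1 ≤ C)
    (hb : ∀ x y, |W x y| ≤ C) (hb' : ∀ x y, |W' x y| ≤ C) :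
    |homDensity F W hsymm - homDensity F W' hsymm'| ≤
      4 * F.edgeFinset.card * C ^ (F.edgeFinset.card - 1) *
        cutNorm (fun x y => W x y - W' x y) :=
  counting_lemma_general F W W' hmeas hmeas' hsymm hsymm' C hb hb'
end

section
/- (Weak regularity lemma for graphons.) For every graphon W and every ε > 0 there exists a measurable partition P of [0,1] into at most 4^{1/ε²} sets such that ‖W − W_P‖_□ ≤ ε · ‖W‖_2. -/
open MeasureTheory

/-- `V : ι → Set ℝ` is a measurable partition of `[0,1]`. -/
def IsPartition {ι : Type*} (V : ι → Set ℝ) : Prop :=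
  (∀ i, MeasurableSet (V i)) ∧ Pairwise (fun i j => Disjoint (V i) (V j)) ∧
    (⋃ i, V i) = Set.Icc (0:ℝ) 1

/-- The stepping `W_P` of a kernel `W` on a finite partition `V`. -/
noncomputable def stepW {ι : Type*} [Fintype ι] (V : ι → Set ℝ) (W : ℝ → ℝ → ℝ)
    (x y : ℝ) : ℝ :=
  ∑ i, ∑ j,
    Set.indicator (V i) (fun _ => (1:ℝ)) x * Set.indicator (V j) (fun _ => (1:ℝ)) y *
      ((∫ u in V i, ∫ v in V j, W u v) /
        (MeasureTheory.volume (V i)).toReal / (MeasureTheory.volume (V j)).toReal)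

/-- The `L²` norm of a kernel on `[0,1]²`. -/
noncomputable def L2Norm (W : ℝ → ℝ → ℝ) : ℝ :=
  Real.sqrt (∫ x in Set.Icc (0:ℝ) 1, ∫ y in Set.Icc (0:ℝ) 1, (W x y) ^ 2)

/-!
Energy increment. Write `e(F, G) = ∫∫_{[0,1]²} F G` and call `e(W_P, W_P)` the energy of `P`.
Since `W - W_P` is `e`-orthogonal to every kernel that is constant on the cells `P_i × P_j`,
Pythagoras bounds the energy of every partition by `‖W‖₂²`. If `|∫_{S×T} (W - W_P)| > ε ‖W‖₂`,
split every class of `P` by `S` and by `T`: `W_P` and `1_{S×T}` are step kernels of the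
refinement `Q`, so Pythagoras and Cauchy–Schwarz show that the energy grows by at least
`(∫_{S×T} (W - W_P))² > ε² ‖W‖₂²` while the number of classes grows by a factor `4`.
Starting from the trivial partition, this can happen at most `1/ε²` times.
-/

open Set

def IsBoundedKernel (F : ℝ → ℝ → ℝ) : Prop :=
  Measurable (Function.uncurry F) ∧ ∃ C, ∀ x y, |F x y| ≤ C

def IsUnitSubset (S : Set ℝ) : Prop :=
  MeasurableSet S ∧ S ⊆ Icc 0 1

noncomputable def rectIntegral (S T : Set ℝ) (F : ℝ → ℝ → ℝ) : ℝ :=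
  ∫ x in S, ∫ y in T, F x y

noncomputable def kernelInner (F G : ℝ → ℝ → ℝ) : ℝ :=
  rectIntegral (Icc 0 1) (Icc 0 1) (F * G)

noncomputable def rectIndicator (S T : Set ℝ) (x y : ℝ) : ℝ :=
  S.indicator (fun _ => 1) x * T.indicator (fun _ => 1) y

noncomputable def stepKernel {ι : Type*} [Fintype ι] (V : ι → Set ℝ) (c : ι → ι → ℝ)
    (x y : ℝ) : ℝ :=
  ∑ i, ∑ j, rectIndicator (V i) (V j) x y * c i j

section BoundedKernel

variable {F G : ℝ → ℝ → ℝ} {S T : Set ℝ}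

theorem IsBoundedKernel.sub (hF : IsBoundedKernel F) (hG : IsBoundedKernel G) :
    IsBoundedKernel (F - G) := by
  obtain ⟨C, hC⟩ := hF.2
  obtain ⟨D, hD⟩ := hG.2
  exact ⟨hF.1.sub hG.1, C + D, fun x y => (abs_sub _ _).trans (add_le_add (hC x y) (hD x y))⟩

theorem IsBoundedKernel.mul (hF : IsBoundedKernel F) (hG : IsBoundedKernel G) :
    IsBoundedKernel (F * G) := by
  obtain ⟨C, hC⟩ := hF.2
  obtain ⟨D, hD⟩ := hG.2
  refine ⟨hF.1.mul hG.1, C * D, fun x y => ?_⟩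
  rw [Pi.mul_apply, Pi.mul_apply, abs_mul]
  exact mul_le_mul (hC x y) (hD x y) (abs_nonneg _) ((abs_nonneg _).trans (hC x y))

theorem IsBoundedKernel.const_smul (hF : IsBoundedKernel F) (t : ℝ) :
    IsBoundedKernel (t • F) := by
  obtain ⟨C, hC⟩ := hF.2
  refine ⟨hF.1.const_smul t, |t| * C, fun x y => ?_⟩
  rw [Pi.smul_apply, Pi.smul_apply, smul_eq_mul, abs_mul]
  exact mul_le_mul_of_nonneg_left (hC x y) (abs_nonneg t)

theorem IsBoundedKernel.mul_const (hF : IsBoundedKernel F) (c : ℝ) :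
    IsBoundedKernel (fun x y => F x y * c) := by
  obtain ⟨C, hC⟩ := hF.2
  refine ⟨hF.1.mul_const c, C * |c|, fun x y => ?_⟩
  rw [abs_mul]
  exact mul_le_mul_of_nonneg_right (hC x y) (abs_nonneg c)

theorem IsBoundedKernel.sum {ι : Type*} [Fintype ι] {F : ι → ℝ → ℝ → ℝ}
    (hF : ∀ i, IsBoundedKernel (F i)) : IsBoundedKernel (fun x y => ∑ i, F i x y) := by
  choose hmeas C hC using hF
  refine ⟨Finset.measurable_sum (f := fun i => Function.uncurry (F i)) _ fun i _ => hmeas i,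
    ∑ i, C i, fun x y => ?_⟩
  exact (Finset.abs_sum_le_sum_abs _ _).trans (Finset.sum_le_sum fun i _ => hC i x y)

theorem isBoundedKernel_rectIndicator (hS : MeasurableSet S) (hT : MeasurableSet T) :
    IsBoundedKernel (rectIndicator S T) := by
  refine ⟨((measurable_const.indicator hS).comp measurable_fst).mul
    ((measurable_const.indicator hT).comp measurable_snd), 1, fun x y => ?_⟩
  by_cases hx : x ∈ S <;> by_cases hy : y ∈ T <;> simp [rectIndicator, hx, hy]

theorem isBoundedKernel_stepKernel {ι : Type*} [Fintype ι] {V : ι → Set ℝ}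
    (hV : ∀ i, MeasurableSet (V i)) (c : ι → ι → ℝ) : IsBoundedKernel (stepKernel V c) :=
  .sum fun i => .sum fun j => (isBoundedKernel_rectIndicator (hV i) (hV j)).mul_const (c i j)

theorem IsBoundedKernel.integrableOn (hF : IsBoundedKernel F) (x : ℝ) (hT : volume T < ⊤) :
    IntegrableOn (F x) T := by
  obtain ⟨C, hC⟩ := hF.2
  exact .of_bound hT (hF.1.comp measurable_prodMk_left).aestronglyMeasurable C
    (.of_forall fun y => (Real.norm_eq_abs _).trans_le (hC x y))

theorem IsBoundedKernel.integrableOn_integral (hF : IsBoundedKernel F) (hS : volume S < ⊤)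
    (hT : volume T < ⊤) : IntegrableOn (fun x => ∫ y in T, F x y) S := by
  obtain ⟨C, hC⟩ := hF.2
  refine .of_bound hS (hF.1.stronglyMeasurable.integral_prod_right'
    (ν := volume.restrict T)).aestronglyMeasurable (C * volume.real T) (.of_forall fun x => ?_)
  exact norm_setIntegral_le_of_norm_le_const hT fun y _ => (Real.norm_eq_abs _).trans_le (hC x y)

end BoundedKernel

section RectIntegral

variable {F G : ℝ → ℝ → ℝ} {S T : Set ℝ}

theorem rectIntegral_sub (hF : IsBoundedKernel F) (hG : IsBoundedKernel G)
    (hS : volume S < ⊤) (hT : volume T < ⊤) :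
    rectIntegral S T (F - G) = rectIntegral S T F - rectIntegral S T G := by
  simp only [rectIntegral, Pi.sub_apply]
  rw [← integral_sub (hF.integrableOn_integral hS hT) (hG.integrableOn_integral hS hT)]
  exact integral_congr_ae (.of_forall fun x =>
    integral_sub (hF.integrableOn x hT) (hG.integrableOn x hT))

theorem rectIntegral_sum {ι : Type*} [Fintype ι] {F : ι → ℝ → ℝ → ℝ}
    (hF : ∀ i, IsBoundedKernel (F i)) (hS : volume S < ⊤) (hT : volume T < ⊤) :
    rectIntegral S T (fun x y => ∑ i, F i x y) = ∑ i, rectIntegral S T (F i) := by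
  simp only [rectIntegral]
  rw [← integral_finsetSum _ fun i _ => (hF i).integrableOn_integral hS hT]
  exact integral_congr_ae (.of_forall fun x =>
    integral_finsetSum _ fun i _ => (hF i).integrableOn x hT)

theorem rectIntegral_congr (hS : MeasurableSet S) (hT : MeasurableSet T)
    (h : ∀ x ∈ S, ∀ y ∈ T, F x y = G x y) : rectIntegral S T F = rectIntegral S T G :=
  setIntegral_congr_fun hS fun x hx => setIntegral_congr_fun hT fun y hy => h x hx y hy

theorem rectIntegral_const (S T : Set ℝ) (c : ℝ) :
    rectIntegral S T (fun _ _ => c) = volume.real S * volume.real T * c := by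
  simp [rectIntegral, mul_assoc]

theorem rectIntegral_smul (S T : Set ℝ) (F : ℝ → ℝ → ℝ) (t : ℝ) :
    rectIntegral S T (t • F) = t * rectIntegral S T F := by
  simp only [rectIntegral, Pi.smul_apply, smul_eq_mul, integral_const_mul]

theorem rectIntegral_of_measure_zero_left (hS : volume S = 0) (T : Set ℝ) (F : ℝ → ℝ → ℝ) :
    rectIntegral S T F = 0 := by
  rw [rectIntegral, Measure.restrict_eq_zero.mpr hS, integral_zero_measure]

theorem rectIntegral_of_measure_zero_right (S : Set ℝ) (hT : volume T = 0) (F : ℝ → ℝ → ℝ) :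
    rectIntegral S T F = 0 := by
  simp [rectIntegral, Measure.restrict_eq_zero.mpr hT]

theorem rectIntegral_nonneg (S T : Set ℝ) (h : ∀ x y, 0 ≤ F x y) : 0 ≤ rectIntegral S T F :=
  integral_nonneg fun x => integral_nonneg fun y => h x y

theorem IsUnitSubset.measure_lt_top (hS : IsUnitSubset S) : volume S < ⊤ :=
  (measure_mono hS.2).trans_lt measure_Icc_lt_top

theorem IsUnitSubset.measureReal_le_one (hS : IsUnitSubset S) : volume.real S ≤ 1 :=
  (measureReal_mono hS.2 measure_Icc_lt_top.ne).trans (by simp [Real.volume_real_Icc])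

end RectIntegral

section KernelInner

variable {F G H : ℝ → ℝ → ℝ} {S T : Set ℝ}

theorem kernelInner_comm (F G : ℝ → ℝ → ℝ) : kernelInner F G = kernelInner G F := by
  rw [kernelInner, mul_comm, kernelInner]

theorem kernelInner_self_nonneg (F : ℝ → ℝ → ℝ) : 0 ≤ kernelInner F F :=
  rectIntegral_nonneg _ _ fun x y => mul_self_nonneg (F x y)

theorem kernelInner_sub_left (hF : IsBoundedKernel F) (hG : IsBoundedKernel G)
    (hH : IsBoundedKernel H) : kernelInner (F - G) H = kernelInner F H - kernelInner G H := by
  rw [kernelInner, sub_mul, rectIntegral_sub (hF.mul hH) (hG.mul hH) measure_Icc_lt_top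
    measure_Icc_lt_top, kernelInner, kernelInner]

theorem kernelInner_smul_left (t : ℝ) (F G : ℝ → ℝ → ℝ) :
    kernelInner (t • F) G = t * kernelInner F G := by
  rw [kernelInner, smul_mul_assoc, rectIntegral_smul, kernelInner]

theorem kernelInner_mul_const_right (F G : ℝ → ℝ → ℝ) (c : ℝ) :
    kernelInner F (fun x y => G x y * c) = kernelInner F G * c := by
  simp only [kernelInner, rectIntegral, Pi.mul_apply, ← mul_assoc, integral_mul_const]

theorem kernelInner_congr_right (h : ∀ x ∈ Icc (0:ℝ) 1, ∀ y ∈ Icc (0:ℝ) 1, G x y = H x y) :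
    kernelInner F G = kernelInner F H :=
  rectIntegral_congr measurableSet_Icc measurableSet_Icc fun x hx y hy => by
    simp only [Pi.mul_apply, h x hx y hy]

theorem kernelInner_sub_smul_self (hF : IsBoundedKernel F) (hG : IsBoundedKernel G) (t : ℝ) :
    kernelInner (F - t • G) (F - t • G) =
      kernelInner F F - 2 * t * kernelInner F G + t ^ 2 * kernelInner G G := by
  have htG := hG.const_smul t
  rw [kernelInner_sub_left hF htG (hF.sub htG), kernelInner_smul_left, kernelInner_comm F,
    kernelInner_comm G, kernelInner_sub_left hF htG hF, kernelInner_sub_left hF htG hG,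
    kernelInner_smul_left, kernelInner_smul_left, kernelInner_comm G F]
  ring

theorem sq_kernelInner_le (hF : IsBoundedKernel F) (hG : IsBoundedKernel G) :
    kernelInner F G ^ 2 ≤ kernelInner F F * kernelInner G G := by
  have h := discrim_le_zero (a := kernelInner G G) (b := -2 * kernelInner F G)
    (c := kernelInner F F) fun t => by
      have := kernelInner_self_nonneg (F - t • G)
      rw [kernelInner_sub_smul_self hF hG] at this
      linarith
  rw [discrim] at h
  nlinarith

theorem kernelInner_self_eq_add_of_orthogonal (hF : IsBoundedKernel F) (hG : IsBoundedKernel G)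
    (h : kernelInner (F - G) G = 0) :
    kernelInner F F = kernelInner G G + kernelInner (F - G) (F - G) := by
  have hFG := hF.sub hG
  rw [kernelInner_sub_left hF hG hFG, kernelInner_comm F (F - G), kernelInner_comm G (F - G),
    kernelInner_sub_left hF hG hF, h, kernelInner_comm G F]
  rw [kernelInner_sub_left hF hG hG] at h
  linarith

theorem kernelInner_rectIndicator (F : ℝ → ℝ → ℝ) (hS : IsUnitSubset S) (hT : IsUnitSubset T) :
    kernelInner F (rectIndicator S T) = rectIntegral S T F := by
  have hinner : ∀ x, ∫ y in Icc 0 1, (F * rectIndicator S T) x y =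
      S.indicator (fun x => ∫ y in T, F x y) x := by
    intro x
    by_cases hx : x ∈ S
    · have hT' : ∀ y, (F * rectIndicator S T) x y = T.indicator (F x) y := fun y => by
        by_cases hy : y ∈ T <;> simp [rectIndicator, hx, hy]
      simp_rw [hT', setIntegral_indicator hT.1, inter_eq_right.mpr hT.2, indicator_of_mem hx]
    · simp [rectIndicator, hx]
  simp_rw [kernelInner, rectIntegral, hinner, setIntegral_indicator hS.1, inter_eq_right.mpr hS.2]

theorem sq_rectIntegral_le (hF : IsBoundedKernel F) (hS : IsUnitSubset S) (hT : IsUnitSubset T) :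
    rectIntegral S T F ^ 2 ≤ kernelInner F F := by
  have hI := isBoundedKernel_rectIndicator hS.1 hT.1
  have hII : kernelInner (rectIndicator S T) (rectIndicator S T) ≤ 1 := by
    rw [kernelInner_rectIndicator _ hS hT, rectIntegral_congr hS.1 hT.1 (G := fun _ _ => 1)
      fun x hx y hy => by simp [rectIndicator, hx, hy], rectIntegral_const, mul_one]
    exact mul_le_one₀ hS.measureReal_le_one measureReal_nonneg hT.measureReal_le_one
  rw [← kernelInner_rectIndicator F hS hT]
  calc kernelInner F (rectIndicator S T) ^ 2
      ≤ kernelInner F F * kernelInner (rectIndicator S T) (rectIndicator S T) :=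
        sq_kernelInner_le hF hI
    _ ≤ kernelInner F F := mul_le_of_le_one_right (kernelInner_self_nonneg F) hII

theorem kernelInner_stepKernel {ι : Type*} [Fintype ι] (hF : IsBoundedKernel F)
    {V : ι → Set ℝ} (hV : ∀ i, IsUnitSubset (V i)) (c : ι → ι → ℝ) :
    kernelInner F (stepKernel V c) = ∑ i, ∑ j, rectIntegral (V i) (V j) F * c i j := by
  have hterm : ∀ i j, IsBoundedKernel (F * fun x y => rectIndicator (V i) (V j) x y * c i j) :=
    fun i j => hF.mul ((isBoundedKernel_rectIndicator (hV i).1 (hV j).1).mul_const _)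
  have hsum : F * stepKernel V c = fun x y => ∑ i, ∑ j,
      (F * fun x y => rectIndicator (V i) (V j) x y * c i j) x y := by
    funext x y
    simp only [stepKernel, Pi.mul_apply, Finset.mul_sum]
  rw [kernelInner, hsum, rectIntegral_sum (fun i => .sum (hterm i)) measure_Icc_lt_top
    measure_Icc_lt_top]
  refine Finset.sum_congr rfl fun i _ => ?_
  rw [rectIntegral_sum (hterm i) measure_Icc_lt_top measure_Icc_lt_top]
  refine Finset.sum_congr rfl fun j _ => ?_
  rw [← kernelInner, kernelInner_mul_const_right, kernelInner_rectIndicator F (hV i) (hV j)]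

end KernelInner

section Partition

variable {ι : Type*} {V : ι → Set ℝ}

theorem IsPartition.isUnitSubset (hV : IsPartition V) (i : ι) : IsUnitSubset (V i) :=
  ⟨hV.1 i, hV.2.2 ▸ subset_iUnion V i⟩

theorem IsPartition.exists_mem (hV : IsPartition V) {x : ℝ} (hx : x ∈ Icc (0:ℝ) 1) :
    ∃ i, x ∈ V i :=
  mem_iUnion.mp (hV.2.2 ▸ hx)

theorem indicator_one_eq_ite_of_mem [DecidableEq ι] (hV : Pairwise fun i j => Disjoint (V i) (V j))
    {a : ι} {x : ℝ} (hx : x ∈ V a) (i : ι) :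
    (V i).indicator (fun _ => (1:ℝ)) x = if a = i then 1 else 0 := by
  split_ifs with h
  · exact indicator_of_mem (h ▸ hx) _
  · exact indicator_of_notMem (fun hi => disjoint_left.mp (hV h) hx hi) _

end Partition

section StepKernel

variable {ι κ : Type*} [Fintype ι] [Fintype κ] {V : ι → Set ℝ} {U : κ → Set ℝ}
  {G W : ℝ → ℝ → ℝ}

theorem stepKernel_apply_of_mem (hV : Pairwise fun i j => Disjoint (V i) (V j))
    {a b : ι} {x y : ℝ} (hx : x ∈ V a) (hy : y ∈ V b) (c : ι → ι → ℝ) :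
    stepKernel V c x y = c a b := by
  classical
  simp [stepKernel, rectIndicator, indicator_one_eq_ite_of_mem hV hx,
    indicator_one_eq_ite_of_mem hV hy]

theorem rectIntegral_cell_stepKernel (hV : IsPartition V) (c : ι → ι → ℝ) (a b : ι) :
    rectIntegral (V a) (V b) (stepKernel V c) = volume.real (V a) * volume.real (V b) * c a b := by
  rw [rectIntegral_congr (hV.1 a) (hV.1 b) fun x hx y hy => stepKernel_apply_of_mem hV.2.1 hx hy c,
    rectIntegral_const]

theorem stepW_eq_stepKernel (V : ι → Set ℝ) (W : ℝ → ℝ → ℝ) :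
    stepW V W = stepKernel V fun i j =>
      rectIntegral (V i) (V j) W / volume.real (V i) / volume.real (V j) :=
  rfl

theorem isBoundedKernel_stepW (hV : ∀ i, MeasurableSet (V i)) (W : ℝ → ℝ → ℝ) :
    IsBoundedKernel (stepW V W) :=
  isBoundedKernel_stepKernel hV _

theorem rectIntegral_cell_stepW (hV : IsPartition V) (W : ℝ → ℝ → ℝ) (a b : ι) :
    rectIntegral (V a) (V b) (stepW V W) = rectIntegral (V a) (V b) W := by
  rw [stepW_eq_stepKernel, rectIntegral_cell_stepKernel hV]
  by_cases ha : volume.real (V a) = 0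
  · rw [ha, rectIntegral_of_measure_zero_left
      ((measureReal_eq_zero_iff (hV.isUnitSubset a).measure_lt_top.ne).mp ha)]
    ring
  by_cases hb : volume.real (V b) = 0
  · rw [hb, rectIntegral_of_measure_zero_right _
      ((measureReal_eq_zero_iff (hV.isUnitSubset b).measure_lt_top.ne).mp hb)]
    ring
  field_simp

def IsStepOn (V : ι → Set ℝ) (G : ℝ → ℝ → ℝ) : Prop :=
  ∃ c, ∀ x ∈ Icc (0:ℝ) 1, ∀ y ∈ Icc (0:ℝ) 1, G x y = stepKernel V c x y

theorem isStepOn_stepW (V : ι → Set ℝ) (W : ℝ → ℝ → ℝ) : IsStepOn V (stepW V W) :=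
  ⟨_, fun _ _ _ _ => rfl⟩

theorem IsStepOn.of_subset (hG : IsStepOn V G) (hV : Pairwise fun i j => Disjoint (V i) (V j))
    (hU : IsPartition U) (f : κ → ι) (hf : ∀ k, U k ⊆ V (f k)) : IsStepOn U G := by
  obtain ⟨c, hc⟩ := hG
  refine ⟨fun k l => c (f k) (f l), fun x hx y hy => ?_⟩
  obtain ⟨k, hk⟩ := hU.exists_mem hx
  obtain ⟨l, hl⟩ := hU.exists_mem hy
  rw [hc x hx y hy, stepKernel_apply_of_mem hV (hf k hk) (hf l hl),
    stepKernel_apply_of_mem hU.2.1 hk hl]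

theorem kernelInner_sub_stepW_eq_zero (hW : IsBoundedKernel W) (hV : IsPartition V)
    (hG : IsStepOn V G) : kernelInner (W - stepW V W) G = 0 := by
  obtain ⟨c, hc⟩ := hG
  have hP := isBoundedKernel_stepW hV.1 W
  rw [kernelInner_congr_right hc, kernelInner_stepKernel (hW.sub hP) hV.isUnitSubset]
  refine Finset.sum_eq_zero fun i _ => Finset.sum_eq_zero fun j _ => ?_
  rw [rectIntegral_sub hW hP (hV.isUnitSubset i).measure_lt_top (hV.isUnitSubset j).measure_lt_top,
    rectIntegral_cell_stepW hV, sub_self, zero_mul]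

end StepKernel

section Energy

variable {ι κ : Type*} [Fintype ι] [Fintype κ] {V : ι → Set ℝ} {U : κ → Set ℝ}
  {W : ℝ → ℝ → ℝ}

noncomputable def energy (V : ι → Set ℝ) (W : ℝ → ℝ → ℝ) : ℝ :=
  kernelInner (stepW V W) (stepW V W)

theorem energy_nonneg (V : ι → Set ℝ) (W : ℝ → ℝ → ℝ) : 0 ≤ energy V W :=
  kernelInner_self_nonneg _

theorem energy_le (hW : IsBoundedKernel W) (hV : IsPartition V) :
    energy V W ≤ kernelInner W W := by
  rw [kernelInner_self_eq_add_of_orthogonal hW (isBoundedKernel_stepW hV.1 W)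
    (kernelInner_sub_stepW_eq_zero hW hV (isStepOn_stepW V W))]
  exact le_add_of_nonneg_right (kernelInner_self_nonneg _)

theorem energy_add_sq_rectIntegral_le (hW : IsBoundedKernel W) (hV : IsPartition V)
    (hU : IsPartition U) {S T : Set ℝ} (hS : IsUnitSubset S) (hT : IsUnitSubset T)
    (hVU : IsStepOn U (stepW V W)) (hSTU : IsStepOn U (rectIndicator S T)) :
    energy V W + rectIntegral S T (W - stepW V W) ^ 2 ≤ energy U W := by
  set P := stepW V W
  set Q := stepW U W
  have hP : IsBoundedKernel P := isBoundedKernel_stepW hV.1 W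
  have hQ : IsBoundedKernel Q := isBoundedKernel_stepW hU.1 W
  have hQP : Q - P = (W - P) - (W - Q) := by abel
  have horth : kernelInner (Q - P) P = 0 := by
    rw [hQP, kernelInner_sub_left (hW.sub hP) (hW.sub hQ) hP,
      kernelInner_sub_stepW_eq_zero hW hV (isStepOn_stepW V W),
      kernelInner_sub_stepW_eq_zero hW hU hVU, sub_zero]
  -- `1_{S×T}` is a `U`-step kernel, so testing `Q - P` against it is the same as testing `W - P`.
  have hrect : rectIntegral S T (Q - P) = rectIntegral S T (W - P) := by
    rw [← kernelInner_rectIndicator _ hS hT, hQP,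
      kernelInner_sub_left (hW.sub hP) (hW.sub hQ) (isBoundedKernel_rectIndicator hS.1 hT.1),
      kernelInner_sub_stepW_eq_zero hW hU hSTU, sub_zero, kernelInner_rectIndicator _ hS hT]
  have hpyth := kernelInner_self_eq_add_of_orthogonal hQ hP horth
  have hcs := sq_rectIntegral_le (hQ.sub hP) hS hT
  rw [hrect] at hcs
  rw [energy, energy]
  linarith

end Energy

section Refinement

variable {ι κ : Type*} {V : ι → Set ℝ} {S : Set ℝ}

def splitBy (V : ι → Set ℝ) (S : Set ℝ) (p : ι × Bool) : Set ℝ :=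
  V p.1 ∩ cond p.2 S Sᶜ

theorem splitBy_subset (V : ι → Set ℝ) (S : Set ℝ) (p : ι × Bool) : splitBy V S p ⊆ V p.1 :=
  inter_subset_left

theorem IsPartition.splitBy (hV : IsPartition V) (hS : MeasurableSet S) :
    IsPartition (splitBy V S) := by
  refine ⟨fun p => (hV.1 p.1).inter ?_, fun p q hpq => ?_, ?_⟩
  · cases p.2
    exacts [hS.compl, hS]
  · obtain ⟨i, b⟩ := p
    obtain ⟨j, b'⟩ := q
    by_cases hij : i = j
    · subst hij
      have hb : b ≠ b' := fun h => hpq (h ▸ rfl)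
      refine (Disjoint.inter_right' _ ?_).inter_left' _
      cases b <;> cases b' <;> simp_all [disjoint_compl_left, disjoint_compl_right]
    · exact ((hV.2.1 hij).mono inter_subset_left inter_subset_left)
  · rw [← hV.2.2]
    ext x
    simp only [mem_iUnion, Prod.exists, Bool.exists_bool]
    constructor
    · rintro ⟨i, ⟨hi, -⟩ | ⟨hi, -⟩⟩ <;> exact ⟨i, hi⟩
    · rintro ⟨i, hi⟩
      by_cases hx : x ∈ S
      exacts [⟨i, .inr ⟨hi, hx⟩⟩, ⟨i, .inl ⟨hi, hx⟩⟩]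

theorem indicator_one_eq_cond_of_mem_splitBy {p : ι × Bool} {x : ℝ} (hx : x ∈ splitBy V S p) :
    S.indicator (fun _ => (1:ℝ)) x = cond p.2 1 0 := by
  obtain ⟨-, hx⟩ := hx
  cases h : p.2 <;> simp_all

theorem isStepOn_rectIndicator_splitBy [Fintype ι] {T : Set ℝ}
    (hU : IsPartition (splitBy (splitBy V S) T)) :
    IsStepOn (splitBy (splitBy V S) T) (rectIndicator S T) := by
  refine ⟨fun k l => cond k.1.2 1 0 * cond l.2 1 0, fun x hx y hy => ?_⟩
  obtain ⟨k, hk⟩ := hU.exists_mem hx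
  obtain ⟨l, hl⟩ := hU.exists_mem hy
  rw [stepKernel_apply_of_mem hU.2.1 hk hl, rectIndicator,
    indicator_one_eq_cond_of_mem_splitBy (splitBy_subset _ _ k hk),
    indicator_one_eq_cond_of_mem_splitBy hl]

theorem IsPartition.comp_equiv (hV : IsPartition V) (e : κ ≃ ι) : IsPartition (V ∘ e) :=
  ⟨fun k => hV.1 (e k), fun _ _ hkl => hV.2.1 (e.injective.ne hkl),
    by rw [← hV.2.2]; exact e.surjective.iUnion_comp V⟩

theorem energy_comp_equiv [Fintype ι] [Fintype κ] (V : ι → Set ℝ) (W : ℝ → ℝ → ℝ) (e : κ ≃ ι) :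
    energy (V ∘ e) W = energy V W := by
  have hstep : stepW (V ∘ e) W = stepW V W := by
    funext x y
    exact Fintype.sum_equiv e _ _ fun k => Fintype.sum_equiv e _ _ fun l => rfl
  rw [energy, hstep, energy]

end Refinement

theorem exists_lt_abs_rectIntegral_of_lt_cutNorm {F : ℝ → ℝ → ℝ} {δ : ℝ} (hδ : 0 ≤ δ)
    (h : δ < cutNorm F) : ∃ S T, IsUnitSubset S ∧ IsUnitSubset T ∧ δ < |rectIntegral S T F| := by
  by_contra! hle
  refine h.not_ge (Real.sSup_le ?_ hδ)
  rintro r ⟨S, T, hS, hT, hS1, hT1, rfl⟩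
  exact hle S T ⟨hS, hS1⟩ ⟨hT, hT1⟩

section Iteration

variable {W : ℝ → ℝ → ℝ} {δ : ℝ}

theorem exists_partition_energy_gt_of_lt_cutNorm (hW : IsBoundedKernel W) {m : ℕ}
    {V : Fin m → Set ℝ} (hV : IsPartition V) (hδ : 0 ≤ δ) (hcut : δ < cutNorm (W - stepW V W)) :
    ∃ V' : Fin (4 * m) → Set ℝ, IsPartition V' ∧ energy V W + δ ^ 2 < energy V' W := by
  obtain ⟨S, T, hS, hT, hST⟩ := exists_lt_abs_rectIntegral_of_lt_cutNorm hδ hcut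
  have hU : IsPartition (splitBy (splitBy V S) T) := (hV.splitBy hS.1).splitBy hT.1
  have hinc := energy_add_sq_rectIntegral_le hW hV hU hS hT
    ((isStepOn_stepW V W).of_subset hV.2.1 hU (fun k => k.1.1)
      fun k => (splitBy_subset _ _ k).trans (splitBy_subset _ _ k.1))
    (isStepOn_rectIndicator_splitBy hU)
  have hsq : δ ^ 2 < rectIntegral S T (W - stepW V W) ^ 2 := by
    rw [← sq_abs (rectIntegral S T _)]
    exact pow_lt_pow_left₀ hST hδ two_ne_zero
  let e : Fin (4 * m) ≃ (Fin m × Bool) × Bool := Fintype.equivOfCardEq (by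
    simp only [Fintype.card_fin, Fintype.card_prod, Fintype.card_bool]; ring)
  exact ⟨_, hU.comp_equiv e, by rw [energy_comp_equiv]; linarith⟩

theorem exists_partition_cutNorm_le_or_le_energy (hW : IsBoundedKernel W) (hδ : 0 ≤ δ) (n : ℕ) :
    ∃ (m : ℕ) (V : Fin m → Set ℝ), IsPartition V ∧ m ≤ 4 ^ n ∧
      (cutNorm (W - stepW V W) ≤ δ ∨ n * δ ^ 2 ≤ energy V W) := by
  induction n with
  | zero =>
    refine ⟨1, fun _ => Icc 0 1, ⟨fun _ => measurableSet_Icc, fun i j hij =>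
      (hij (Subsingleton.elim i j)).elim, iUnion_const _⟩, le_rfl, .inr ?_⟩
    simpa using energy_nonneg _ W
  | succ n ih =>
    obtain ⟨m, V, hV, hm, hdone⟩ := ih
    by_cases hcut : cutNorm (W - stepW V W) ≤ δ
    · exact ⟨m, V, hV, hm.trans (Nat.pow_le_pow_right (by norm_num) n.le_succ), .inl hcut⟩
    obtain ⟨V', hV', hgt⟩ :=
      exists_partition_energy_gt_of_lt_cutNorm hW hV hδ (not_le.mp hcut)
    refine ⟨4 * m, V', hV', by rw [pow_succ]; omega, .inr ?_⟩
    push_cast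
    linarith [hdone.resolve_left hcut]

theorem exists_partition_cutNorm_le (hW : IsBoundedKernel W) (hδ : 0 ≤ δ) (n : ℕ)
    (hn : kernelInner W W ≤ (n + 1) * δ ^ 2) :
    ∃ (m : ℕ) (V : Fin m → Set ℝ), IsPartition V ∧ m ≤ 4 ^ n ∧ cutNorm (W - stepW V W) ≤ δ := by
  obtain ⟨m, V, hV, hm, hcut | hen⟩ := exists_partition_cutNorm_le_or_le_energy hW hδ n
  · exact ⟨m, V, hV, hm, hcut⟩
  refine ⟨m, V, hV, hm, not_lt.mp fun hcut => ?_⟩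
  obtain ⟨V', hV', hgt⟩ := exists_partition_energy_gt_of_lt_cutNorm hW hV hδ hcut
  linarith [energy_le hW hV']

end Iteration

theorem L2Norm_sq (W : ℝ → ℝ → ℝ) : L2Norm W ^ 2 = kernelInner W W := by
  rw [L2Norm, Real.sq_sqrt (integral_nonneg fun x => integral_nonneg fun y => sq_nonneg _)]
  simp only [kernelInner, rectIntegral, Pi.mul_apply, sq]

theorem weak_regularity_general (W : ℝ → ℝ → ℝ)
    (hmeas : Measurable (Function.uncurry W))
    (hbdd : ∃ C : ℝ, ∀ x y, |W x y| ≤ C)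
    (ε : ℝ) (hε : 0 < ε) :
    ∃ (m : ℕ) (V : Fin m → Set ℝ), IsPartition V ∧
      (m : ℝ) ≤ (4 : ℝ) ^ ((1 : ℝ) / ε ^ 2) ∧
      cutNorm (fun x y => W x y - stepW V W x y) ≤ ε * L2Norm W := by
  set N := ⌊1 / ε ^ 2⌋₊
  have hN : 1 ≤ (N + 1) * ε ^ 2 := by
    have := Nat.lt_floor_add_one (1 / ε ^ 2)
    rw [div_lt_iff₀ (by positivity)] at this
    linarith
  have hδ : 0 ≤ ε * L2Norm W := mul_nonneg hε.le (Real.sqrt_nonneg _)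
  obtain ⟨m, V, hV, hm, hcut⟩ := exists_partition_cutNorm_le ⟨hmeas, hbdd⟩ hδ N (by
    rw [mul_pow, L2Norm_sq, ← mul_assoc]
    exact le_mul_of_one_le_left (kernelInner_self_nonneg W) hN)
  refine ⟨m, V, hV, ?_, hcut⟩
  calc (m : ℝ) ≤ (4 : ℝ) ^ (N : ℝ) := by rw [Real.rpow_natCast]; exact_mod_cast hm
    _ ≤ (4 : ℝ) ^ ((1 : ℝ) / ε ^ 2) :=
      Real.rpow_le_rpow_of_exponent_le (by norm_num) (Nat.floor_le (by positivity))

/-- Weak regularity lemma for graphons: for every graphon `W` and `ε > 0` there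
is a measurable partition `P` of `[0,1]` into at most `4^{1/ε²}` classes with
`‖W − W_P‖_□ ≤ ε ‖W‖₂`. -/
theorem weak_regularity (W : ℝ → ℝ → ℝ)
    (hmeas : Measurable (Function.uncurry W)) (hsymm : ∀ x y, W x y = W y x)
    (hbdd : ∃ C : ℝ, ∀ x y, |W x y| ≤ C)
    (ε : ℝ) (hε : 0 < ε) :
    ∃ (m : ℕ) (V : Fin m → Set ℝ), IsPartition V ∧
      (m : ℝ) ≤ (4 : ℝ) ^ ((1 : ℝ) / ε ^ 2) ∧
      cutNorm (fun x y => W x y - stepW V W x y) ≤ ε * L2Norm W :=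
  weak_regularity_general W hmeas hbdd ε hε
end
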